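/- Assume |q| = 1, |q_ij| = 1 for all 1 ≤ i < j ≤ 4, and the relations q₁₃ = q₁₂q₂₄/q₃₄ and q₁₄ = q₁₂q₂₄²/(q₂₃q₃₄). Let ω̃ be the unique conjugate-linear (i.e. additive and satisfying ω̃(cP) = c̄·ω̃(P) for c ∈ ℂ) anti-homomorphism (ω̃(PQ) = ω̃(Q)ω̃(P)) of the free associative ℂ-algebra on the six generators determined by ω̃(x₊) = x₊, ω̃(x₋) = x₋, ω̃(v) = v̄, ω̃(v̄) = v, ω̃(z) = z̄, ω̃(z̄) = z. Then ω̃ maps the defining ideal I(q,q_ij) into itself, and hence descends to a conjugate-linear anti-automorphism ω of the quotient algebra A(q,q_ij) which satisfies ω∘ω = id. -/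

import Mathlib

open scoped ComplexConjugate

/-- The free associative unital `ℂ`-algebra on the six generators
`x₊, x₋, v, v̄, z, z̄` (indexed `0,…,5` in this order). -/
abbrev F6 : Type := FreeAlgebra ℂ (Fin 6)

noncomputable def Xp : F6 := FreeAlgebra.ι ℂ 0
noncomputable def Xm : F6 := FreeAlgebra.ι ℂ 1
noncomputable def V  : F6 := FreeAlgebra.ι ℂ 2
noncomputable def Vb : F6 := FreeAlgebra.ι ℂ 3
noncomputable def Z  : F6 := FreeAlgebra.ι ℂ 4
noncomputable def Zb : F6 := FreeAlgebra.ι ℂ 5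

/-- The fifteen elements (lhs − rhs of the fifteen defining relations) generating
the defining ideal `I(q, q_ij)` of the multiparameter quantum flag manifold. -/
noncomputable def relSet (q q₁₂ q₁₃ q₁₄ q₂₃ q₂₄ q₃₄ : ℂ) : Set F6 :=
  { Xp * V - (q₂₃ * q₃₄ / q₂₄) • (V * Xp),
    Vb * Xp - (q₁₄ / (q₁₂ * q₂₄)) • (Xp * Vb),
    Xm * V - (q₁₃ / (q₁₂ * q₂₃)) • (V * Xm),
    Vb * Xm - (q₁₃ * q₃₄ / q₁₄) • (Xm * Vb),
    Vb * V - (q₁₃ * q₃₄ / (q₁₂ * q₂₄)) • (V * Vb),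
    (q * q₂₄ / (q₂₃ * q₃₄)) • (Xp * Xm) - (q₁₂ * q₂₄ / (q * q₁₄)) • (Xm * Xp)
      - (q - q⁻¹) • (V * Vb),
    Zb * Z - (q₁₃ * q₂₄ / (q₁₄ * q₂₃)) • (Z * Zb),
    Zb * Xp - (q₁₃ * q₃₄ / q₁₄) • (Xp * Zb),
    Zb * Xm - (q₂₃ * q₃₄ / (q ^ 2 * q₂₄)) • (Xm * Zb) - (q - q⁻¹) • Vb,
    Zb * Vb - (q₂₃ * q₃₄ / q₂₄) • (Vb * Zb),
    Zb * V - (q₁₃ * q₃₄ / (q ^ 2 * q₁₄)) • (V * Zb) - (q - q⁻¹) • Xp,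
    Xp * Z - (q₁₄ / (q₁₂ * q₂₄)) • (Z * Xp),
    Xm * Z - (q ^ 2 * q₁₃ / (q₁₂ * q₂₃)) • (Z * Xm) + (q - q⁻¹) • V,
    V * Z - (q₁₃ / (q₁₂ * q₂₃)) • (Z * V),
    Vb * Z - (q ^ 2 * q₁₄ / (q₁₂ * q₂₄)) • (Z * Vb) + (q - q⁻¹) • Xp }

/-- The defining two-sided ideal `I(q, q_ij)`. -/
noncomputable def qIdeal (q q₁₂ q₁₃ q₁₄ q₂₃ q₂₄ q₃₄ : ℂ) : TwoSidedIdeal F6 :=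
  TwoSidedIdeal.span (relSet q q₁₂ q₁₃ q₁₄ q₂₃ q₂₄ q₃₄)

/-- The quotient algebra `A(q, q_ij) = F6 / I(q, q_ij)`. -/
noncomputable abbrev Aq (q q₁₂ q₁₃ q₁₄ q₂₃ q₂₄ q₃₄ : ℂ) : Type :=
  (qIdeal q q₁₂ q₁₃ q₁₄ q₂₃ q₂₄ q₃₄).ringCon.Quotient

/-- The quotient map `F6 → A(q, q_ij)`. -/
noncomputable def qproj (q q₁₂ q₁₃ q₁₄ q₂₃ q₂₄ q₃₄ : ℂ) :
    F6 →+* Aq q q₁₂ q₁₃ q₁₄ q₂₃ q₂₄ q₃₄ :=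
  (qIdeal q q₁₂ q₁₃ q₁₄ q₂₃ q₂₄ q₃₄).ringCon.mk'

set_option maxHeartbeats 4000000 in
/-- If all parameters are phases and `q₁₃ = q₁₂q₂₄/q₃₄`, `q₁₄ = q₁₂q₂₄²/(q₂₃q₃₄)`,
then the conjugate-linear anti-homomorphism `ω̃` of the free algebra with
`ω̃(x₊) = x₊`, `ω̃(x₋) = x₋`, `ω̃(v) = v̄`, `ω̃(v̄) = v`, `ω̃(z) = z̄`, `ω̃(z̄) = z`
maps the defining ideal into itself and descends to a conjugate-linear
anti-automorphism `ω` of the quotient algebra with `ω ∘ ω = id`. -/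
theorem conjugation_preserves_ideal_and_descends
    (q q₁₂ q₁₃ q₁₄ q₂₃ q₂₄ q₃₄ : ℂ)
    (hq : q ≠ 0) (h₁₂ : q₁₂ ≠ 0) (h₁₃ : q₁₃ ≠ 0) (h₁₄ : q₁₄ ≠ 0)
    (h₂₃ : q₂₃ ≠ 0) (h₂₄ : q₂₄ ≠ 0) (h₃₄ : q₃₄ ≠ 0)
    (haq : ‖q‖ = 1) (ha₁₂ : ‖q₁₂‖ = 1)
    (ha₁₃ : ‖q₁₃‖ = 1) (ha₁₄ : ‖q₁₄‖ = 1)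
    (ha₂₃ : ‖q₂₃‖ = 1) (ha₂₄ : ‖q₂₄‖ = 1)
    (ha₃₄ : ‖q₃₄‖ = 1)
    (hc₁₃ : q₁₃ = q₁₂ * q₂₄ / q₃₄)
    (hc₁₄ : q₁₄ = q₁₂ * q₂₄ ^ 2 / (q₂₃ * q₃₄))
    (ω' : F6 → F6)
    (hadd : ∀ a b : F6, ω' (a + b) = ω' a + ω' b)
    (hsmul : ∀ (c : ℂ) (a : F6), ω' (c • a) = (conj c) • ω' a)
    (hmul : ∀ a b : F6, ω' (a * b) = ω' b * ω' a)
    (hone : ω' 1 = 1)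
    (hxp : ω' Xp = Xp) (hxm : ω' Xm = Xm)
    (hv : ω' V = Vb) (hvb : ω' Vb = V)
    (hz : ω' Z = Zb) (hzb : ω' Zb = Z) :
    (∀ a ∈ qIdeal q q₁₂ q₁₃ q₁₄ q₂₃ q₂₄ q₃₄,
        ω' a ∈ qIdeal q q₁₂ q₁₃ q₁₄ q₂₃ q₂₄ q₃₄) ∧
    ∃ ω : Aq q q₁₂ q₁₃ q₁₄ q₂₃ q₂₄ q₃₄ → Aq q q₁₂ q₁₃ q₁₄ q₂₃ q₂₄ q₃₄,
      (∀ x y, ω (x + y) = ω x + ω y) ∧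
      (∀ (c : ℂ) (x), ω (c • x) = (conj c) • ω x) ∧
      (∀ x y, ω (x * y) = ω y * ω x) ∧
      (∀ a : F6, ω (qproj q q₁₂ q₁₃ q₁₄ q₂₃ q₂₄ q₃₄ a)
          = qproj q q₁₂ q₁₃ q₁₄ q₂₃ q₂₄ q₃₄ (ω' a)) ∧
      (∀ x, ω (ω x) = x) := by
  classical
  -- conjugation of phases
  have hph : ∀ z : ℂ, z ≠ 0 → ‖z‖ = 1 → (starRingEnd ℂ) z = z⁻¹ := by
    intro z hz0 hz
    have h1 : z * (starRingEnd ℂ) z = 1 := by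
      rw [Complex.mul_conj]
      norm_cast
      rw [Complex.normSq_eq_norm_sq, hz]
      norm_num
    exact (inv_eq_of_mul_eq_one_right h1).symm
  have cq := hph q hq haq
  have c12 := hph q₁₂ h₁₂ ha₁₂
  have c13 := hph q₁₃ h₁₃ ha₁₃
  have c14 := hph q₁₄ h₁₄ ha₁₄
  have c23 := hph q₂₃ h₂₃ ha₂₃
  have c24 := hph q₂₄ h₂₄ ha₂₄
  have c34 := hph q₃₄ h₃₄ ha₃₄
  have hzero : ω' 0 = 0 := by
    have h := hsmul 0 0
    simpa using h
  have hneg : ∀ a : F6, ω' (-a) = - ω' a := by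
    intro a
    rw [← neg_one_smul ℂ a, hsmul]
    simp
  have hsub : ∀ a b : F6, ω' (a - b) = ω' a - ω' b := by
    intro a b
    rw [sub_eq_add_neg, hadd, hneg, ← sub_eq_add_neg]
  set I := qIdeal q q₁₂ q₁₃ q₁₄ q₂₃ q₂₄ q₃₄ with hIdef
  have hgen : ∀ x ∈ relSet q q₁₂ q₁₃ q₁₄ q₂₃ q₂₄ q₃₄, x ∈ I := by
    intro x hx
    exact TwoSidedIdeal.subset_span hx
  have mem_of_eq : ∀ {x y : F6}, x = y → y ∈ I → x ∈ I := by
    rintro x y rfl h; exact h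
  have hsm : ∀ (c : ℂ) (x : F6), x ∈ I → c • x ∈ I := by
    intro c x hx
    rw [Algebra.smul_def]
    exact TwoSidedIdeal.mul_mem_left _ _ _ hx
  have m1 : Xp * V - (q₂₃ * q₃₄ / q₂₄) • (V * Xp) ∈ I := hgen _ (by unfold relSet; exact (Set.mem_insert _ _))
  have m2 : Vb * Xp - (q₁₄ / (q₁₂ * q₂₄)) • (Xp * Vb) ∈ I := hgen _ (by unfold relSet; exact (Set.mem_insert_of_mem _ (Set.mem_insert _ _)))
  have m3 : Xm * V - (q₁₃ / (q₁₂ * q₂₃)) • (V * Xm) ∈ I := hgen _ (by unfold relSet; exact (Set.mem_insert_of_mem _ (Set.mem_insert_of_mem _ (Set.mem_insert _ _))))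
  have m4 : Vb * Xm - (q₁₃ * q₃₄ / q₁₄) • (Xm * Vb) ∈ I := hgen _ (by unfold relSet; exact (Set.mem_insert_of_mem _ (Set.mem_insert_of_mem _ (Set.mem_insert_of_mem _ (Set.mem_insert _ _)))))
  have m5 : Vb * V - (q₁₃ * q₃₄ / (q₁₂ * q₂₄)) • (V * Vb) ∈ I := hgen _ (by unfold relSet; exact (Set.mem_insert_of_mem _ (Set.mem_insert_of_mem _ (Set.mem_insert_of_mem _ (Set.mem_insert_of_mem _ (Set.mem_insert _ _))))))
  have m6 : (q * q₂₄ / (q₂₃ * q₃₄)) • (Xp * Xm) - (q₁₂ * q₂₄ / (q * q₁₄)) • (Xm * Xp)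
      - (q - q⁻¹) • (V * Vb) ∈ I := hgen _ (by unfold relSet; exact (Set.mem_insert_of_mem _ (Set.mem_insert_of_mem _ (Set.mem_insert_of_mem _ (Set.mem_insert_of_mem _ (Set.mem_insert_of_mem _ (Set.mem_insert _ _)))))))
  have m7 : Zb * Z - (q₁₃ * q₂₄ / (q₁₄ * q₂₃)) • (Z * Zb) ∈ I := hgen _ (by unfold relSet; exact (Set.mem_insert_of_mem _ (Set.mem_insert_of_mem _ (Set.mem_insert_of_mem _ (Set.mem_insert_of_mem _ (Set.mem_insert_of_mem _ (Set.mem_insert_of_mem _ (Set.mem_insert _ _))))))))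
  have m8 : Zb * Xp - (q₁₃ * q₃₄ / q₁₄) • (Xp * Zb) ∈ I := hgen _ (by unfold relSet; exact (Set.mem_insert_of_mem _ (Set.mem_insert_of_mem _ (Set.mem_insert_of_mem _ (Set.mem_insert_of_mem _ (Set.mem_insert_of_mem _ (Set.mem_insert_of_mem _ (Set.mem_insert_of_mem _ (Set.mem_insert _ _)))))))))
  have m9 : Zb * Xm - (q₂₃ * q₃₄ / (q ^ 2 * q₂₄)) • (Xm * Zb) - (q - q⁻¹) • Vb ∈ I :=
    hgen _ (by unfold relSet; exact (Set.mem_insert_of_mem _ (Set.mem_insert_of_mem _ (Set.mem_insert_of_mem _ (Set.mem_insert_of_mem _ (Set.mem_insert_of_mem _ (Set.mem_insert_of_mem _ (Set.mem_insert_of_mem _ (Set.mem_insert_of_mem _ (Set.mem_insert _ _))))))))))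
  have m10 : Zb * Vb - (q₂₃ * q₃₄ / q₂₄) • (Vb * Zb) ∈ I := hgen _ (by unfold relSet; exact (Set.mem_insert_of_mem _ (Set.mem_insert_of_mem _ (Set.mem_insert_of_mem _ (Set.mem_insert_of_mem _ (Set.mem_insert_of_mem _ (Set.mem_insert_of_mem _ (Set.mem_insert_of_mem _ (Set.mem_insert_of_mem _ (Set.mem_insert_of_mem _ (Set.mem_insert _ _)))))))))))
  have m11 : Zb * V - (q₁₃ * q₃₄ / (q ^ 2 * q₁₄)) • (V * Zb) - (q - q⁻¹) • Xp ∈ I :=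
    hgen _ (by unfold relSet; exact (Set.mem_insert_of_mem _ (Set.mem_insert_of_mem _ (Set.mem_insert_of_mem _ (Set.mem_insert_of_mem _ (Set.mem_insert_of_mem _ (Set.mem_insert_of_mem _ (Set.mem_insert_of_mem _ (Set.mem_insert_of_mem _ (Set.mem_insert_of_mem _ (Set.mem_insert_of_mem _ (Set.mem_insert _ _))))))))))))
  have m12 : Xp * Z - (q₁₄ / (q₁₂ * q₂₄)) • (Z * Xp) ∈ I := hgen _ (by unfold relSet; exact (Set.mem_insert_of_mem _ (Set.mem_insert_of_mem _ (Set.mem_insert_of_mem _ (Set.mem_insert_of_mem _ (Set.mem_insert_of_mem _ (Set.mem_insert_of_mem _ (Set.mem_insert_of_mem _ (Set.mem_insert_of_mem _ (Set.mem_insert_of_mem _ (Set.mem_insert_of_mem _ (Set.mem_insert_of_mem _ (Set.mem_insert _ _)))))))))))))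
  have m13 : Xm * Z - (q ^ 2 * q₁₃ / (q₁₂ * q₂₃)) • (Z * Xm) + (q - q⁻¹) • V ∈ I :=
    hgen _ (by unfold relSet; exact (Set.mem_insert_of_mem _ (Set.mem_insert_of_mem _ (Set.mem_insert_of_mem _ (Set.mem_insert_of_mem _ (Set.mem_insert_of_mem _ (Set.mem_insert_of_mem _ (Set.mem_insert_of_mem _ (Set.mem_insert_of_mem _ (Set.mem_insert_of_mem _ (Set.mem_insert_of_mem _ (Set.mem_insert_of_mem _ (Set.mem_insert_of_mem _ (Set.mem_insert _ _))))))))))))))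
  have m14 : V * Z - (q₁₃ / (q₁₂ * q₂₃)) • (Z * V) ∈ I := hgen _ (by unfold relSet; exact (Set.mem_insert_of_mem _ (Set.mem_insert_of_mem _ (Set.mem_insert_of_mem _ (Set.mem_insert_of_mem _ (Set.mem_insert_of_mem _ (Set.mem_insert_of_mem _ (Set.mem_insert_of_mem _ (Set.mem_insert_of_mem _ (Set.mem_insert_of_mem _ (Set.mem_insert_of_mem _ (Set.mem_insert_of_mem _ (Set.mem_insert_of_mem _ (Set.mem_insert_of_mem _ (Set.mem_insert _ _)))))))))))))))
  have m15 : Vb * Z - (q ^ 2 * q₁₄ / (q₁₂ * q₂₄)) • (Z * Vb) + (q - q⁻¹) • Xp ∈ I :=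
    hgen _ (by unfold relSet; exact (Set.mem_insert_of_mem _ (Set.mem_insert_of_mem _ (Set.mem_insert_of_mem _ (Set.mem_insert_of_mem _ (Set.mem_insert_of_mem _ (Set.mem_insert_of_mem _ (Set.mem_insert_of_mem _ (Set.mem_insert_of_mem _ (Set.mem_insert_of_mem _ (Set.mem_insert_of_mem _ (Set.mem_insert_of_mem _ (Set.mem_insert_of_mem _ (Set.mem_insert_of_mem _ (Set.mem_insert_of_mem _ (Set.mem_singleton _))))))))))))))))
  have hSJ : ∀ x ∈ relSet q q₁₂ q₁₃ q₁₄ q₂₃ q₂₄ q₃₄, ω' x ∈ I := by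
    intro x hx
    simp only [relSet, Set.mem_insert_iff, Set.mem_singleton_iff] at hx
    rcases hx with rfl | rfl | rfl | rfl | rfl | rfl | rfl | rfl | rfl | rfl | rfl | rfl |
      rfl | rfl | rfl
    · refine mem_of_eq ?_ m2
      simp only [hsub, hadd, hsmul, hmul, hxp, hxm, hv, hvb, hz, hzb, map_div₀, map_mul,
        map_sub, map_pow, map_inv₀, map_one, inv_inv, cq, c12, c13, c14, c23, c24, c34]
      match_scalars <;> (try simp only [hc₁₃, hc₁₄]) <;> (try field_simp) <;> (try ring) <;> (try field_simp) <;> (try ring)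
    · refine mem_of_eq ?_ m1
      simp only [hsub, hadd, hsmul, hmul, hxp, hxm, hv, hvb, hz, hzb, map_div₀, map_mul,
        map_sub, map_pow, map_inv₀, map_one, inv_inv, cq, c12, c13, c14, c23, c24, c34]
      match_scalars <;> (try simp only [hc₁₃, hc₁₄]) <;> (try field_simp) <;> (try ring) <;> (try field_simp) <;> (try ring)
    · refine mem_of_eq ?_ m4
      simp only [hsub, hadd, hsmul, hmul, hxp, hxm, hv, hvb, hz, hzb, map_div₀, map_mul,
        map_sub, map_pow, map_inv₀, map_one, inv_inv, cq, c12, c13, c14, c23, c24, c34]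
      match_scalars <;> (try simp only [hc₁₃, hc₁₄]) <;> (try field_simp) <;> (try ring) <;> (try field_simp) <;> (try ring)
    · refine mem_of_eq ?_ m3
      simp only [hsub, hadd, hsmul, hmul, hxp, hxm, hv, hvb, hz, hzb, map_div₀, map_mul,
        map_sub, map_pow, map_inv₀, map_one, inv_inv, cq, c12, c13, c14, c23, c24, c34]
      match_scalars <;> (try simp only [hc₁₃, hc₁₄]) <;> (try field_simp) <;> (try ring) <;> (try field_simp) <;> (try ring)
    · refine mem_of_eq ?_ m5
      simp only [hsub, hadd, hsmul, hmul, hxp, hxm, hv, hvb, hz, hzb, map_div₀, map_mul,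
        map_sub, map_pow, map_inv₀, map_one, inv_inv, cq, c12, c13, c14, c23, c24, c34]
      match_scalars <;> (try simp only [hc₁₃, hc₁₄]) <;> (try field_simp) <;> (try ring) <;> (try field_simp) <;> (try ring)
    · refine mem_of_eq ?_ (hsm (-1 : ℂ) _ m6)
      simp only [hsub, hadd, hsmul, hmul, hxp, hxm, hv, hvb, hz, hzb, map_div₀, map_mul,
        map_sub, map_pow, map_inv₀, map_one, inv_inv, cq, c12, c13, c14, c23, c24, c34]
      match_scalars <;> (try simp only [hc₁₃, hc₁₄]) <;> (try field_simp) <;> (try ring) <;> (try field_simp) <;> (try ring)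
    · refine mem_of_eq ?_ m7
      simp only [hsub, hadd, hsmul, hmul, hxp, hxm, hv, hvb, hz, hzb, map_div₀, map_mul,
        map_sub, map_pow, map_inv₀, map_one, inv_inv, cq, c12, c13, c14, c23, c24, c34]
      match_scalars <;> (try simp only [hc₁₃, hc₁₄]) <;> (try field_simp) <;> (try ring) <;> (try field_simp) <;> (try ring)
    · refine mem_of_eq ?_ m12
      simp only [hsub, hadd, hsmul, hmul, hxp, hxm, hv, hvb, hz, hzb, map_div₀, map_mul,
        map_sub, map_pow, map_inv₀, map_one, inv_inv, cq, c12, c13, c14, c23, c24, c34]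
      match_scalars <;> (try simp only [hc₁₃, hc₁₄]) <;> (try field_simp) <;> (try ring) <;> (try field_simp) <;> (try ring)
    · refine mem_of_eq ?_ m13
      simp only [hsub, hadd, hsmul, hmul, hxp, hxm, hv, hvb, hz, hzb, map_div₀, map_mul,
        map_sub, map_pow, map_inv₀, map_one, inv_inv, cq, c12, c13, c14, c23, c24, c34]
      match_scalars <;> (try simp only [hc₁₃, hc₁₄]) <;> (try field_simp) <;> (try ring) <;> (try field_simp) <;> (try ring)
    · refine mem_of_eq ?_ m14
      simp only [hsub, hadd, hsmul, hmul, hxp, hxm, hv, hvb, hz, hzb, map_div₀, map_mul,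
        map_sub, map_pow, map_inv₀, map_one, inv_inv, cq, c12, c13, c14, c23, c24, c34]
      match_scalars <;> (try simp only [hc₁₃, hc₁₄]) <;> (try field_simp) <;> (try ring) <;> (try field_simp) <;> (try ring)
    · refine mem_of_eq ?_ m15
      simp only [hsub, hadd, hsmul, hmul, hxp, hxm, hv, hvb, hz, hzb, map_div₀, map_mul,
        map_sub, map_pow, map_inv₀, map_one, inv_inv, cq, c12, c13, c14, c23, c24, c34]
      match_scalars <;> (try simp only [hc₁₃, hc₁₄]) <;> (try field_simp) <;> (try ring) <;> (try field_simp) <;> (try ring)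
    · refine mem_of_eq ?_ m8
      simp only [hsub, hadd, hsmul, hmul, hxp, hxm, hv, hvb, hz, hzb, map_div₀, map_mul,
        map_sub, map_pow, map_inv₀, map_one, inv_inv, cq, c12, c13, c14, c23, c24, c34]
      match_scalars <;> (try simp only [hc₁₃, hc₁₄]) <;> (try field_simp) <;> (try ring) <;> (try field_simp) <;> (try ring)
    · refine mem_of_eq ?_ m9
      simp only [hsub, hadd, hsmul, hmul, hxp, hxm, hv, hvb, hz, hzb, map_div₀, map_mul,
        map_sub, map_pow, map_inv₀, map_one, inv_inv, cq, c12, c13, c14, c23, c24, c34]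
      match_scalars <;> (try simp only [hc₁₃, hc₁₄]) <;> (try field_simp) <;> (try ring) <;> (try field_simp) <;> (try ring)
    · refine mem_of_eq ?_ m10
      simp only [hsub, hadd, hsmul, hmul, hxp, hxm, hv, hvb, hz, hzb, map_div₀, map_mul,
        map_sub, map_pow, map_inv₀, map_one, inv_inv, cq, c12, c13, c14, c23, c24, c34]
      match_scalars <;> (try simp only [hc₁₃, hc₁₄]) <;> (try field_simp) <;> (try ring) <;> (try field_simp) <;> (try ring)
    · refine mem_of_eq ?_ m11
      simp only [hsub, hadd, hsmul, hmul, hxp, hxm, hv, hvb, hz, hzb, map_div₀, map_mul,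
        map_sub, map_pow, map_inv₀, map_one, inv_inv, cq, c12, c13, c14, c23, c24, c34]
      match_scalars <;> (try simp only [hc₁₃, hc₁₄]) <;> (try field_simp) <;> (try ring) <;> (try field_simp) <;> (try ring)
  have main : ∀ a ∈ I, ω' a ∈ I := by
    intro a ha
    have h2 := TwoSidedIdeal.mem_span_iff.mp ha
      (TwoSidedIdeal.mk' {a : F6 | ω' a ∈ I}
        (by simp only [Set.mem_setOf_eq, hzero]; exact TwoSidedIdeal.zero_mem _)
        (fun {x y} hx hy => by
          simp only [Set.mem_setOf_eq] at *
          rw [hadd]; exact TwoSidedIdeal.add_mem _ hx hy)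
        (fun {x} hx => by
          simp only [Set.mem_setOf_eq] at *
          rw [hneg]; exact TwoSidedIdeal.neg_mem _ hx)
        (fun {x y} hy => by
          simp only [Set.mem_setOf_eq] at *
          rw [hmul]; exact TwoSidedIdeal.mul_mem_right _ _ _ hy)
        (fun {x y} hx => by
          simp only [Set.mem_setOf_eq] at *
          rw [hmul]; exact TwoSidedIdeal.mul_mem_left _ _ _ hx))
      (fun x hx => by rw [SetLike.mem_coe, TwoSidedIdeal.mem_mk']; exact hSJ x hx)
    rwa [TwoSidedIdeal.mem_mk'] at h2
  refine ⟨main, ?_⟩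
  have hcomp : ∀ a b : F6, I.ringCon a b → I.ringCon (ω' a) (ω' b) := by
    intro a b h
    rw [TwoSidedIdeal.rel_iff] at h ⊢
    rw [← hsub]
    exact main _ h
  have hid : ∀ a : F6, ω' (ω' a) = a := by
    intro a
    induction a using FreeAlgebra.induction with
    | grade0 r =>
        simp only [Algebra.algebraMap_eq_smul_one, hsmul, hone, Complex.conj_conj]
    | grade1 x =>
        fin_cases x
        · show ω' (ω' Xp) = Xp
          rw [hxp, hxp]
        · show ω' (ω' Xm) = Xm
          rw [hxm, hxm]
        · show ω' (ω' V) = V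
          rw [hv, hvb]
        · show ω' (ω' Vb) = Vb
          rw [hvb, hv]
        · show ω' (ω' Z) = Z
          rw [hz, hzb]
        · show ω' (ω' Zb) = Zb
          rw [hzb, hz]
    | mul a b ha hb => rw [hmul, hmul, ha, hb]
    | add a b ha hb => rw [hadd, hadd, ha, hb]
  set P := qproj q q₁₂ q₁₃ q₁₄ q₂₃ q₂₄ q₃₄ with hP
  have hsurj : ∀ x : Aq q q₁₂ q₁₃ q₁₄ q₂₃ q₂₄ q₃₄, ∃ a : F6, P a = x := by
    intro x
    exact Quotient.inductionOn' x fun a => ⟨a, rfl⟩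
  refine ⟨Quotient.map' ω' hcomp, ?_, ?_, ?_, fun a => rfl, ?_⟩
  · intro x y
    obtain ⟨a, rfl⟩ := hsurj x
    obtain ⟨b, rfl⟩ := hsurj y
    have h1 : P a + P b = P (a + b) := (map_add P a b).symm
    rw [h1]
    show P (ω' (a + b)) = P (ω' a) + P (ω' b)
    rw [hadd, map_add]
  · intro c x
    obtain ⟨a, rfl⟩ := hsurj x
    have h1 : c • P a = P (c • a) := rfl
    rw [h1]
    show P (ω' (c • a)) = conj c • P (ω' a)
    rw [hsmul]
    rfl
  · intro x y
    obtain ⟨a, rfl⟩ := hsurj x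
    obtain ⟨b, rfl⟩ := hsurj y
    have h1 : P a * P b = P (a * b) := (map_mul P a b).symm
    rw [h1]
    show P (ω' (a * b)) = P (ω' b) * P (ω' a)
    rw [hmul, map_mul]
  · intro x
    obtain ⟨a, rfl⟩ := hsurj x
    show P (ω' (ω' a)) = P a
    rw [hid]
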